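/- arXiv:1411.2302 — 2 statements merged into one kernel-verified Lean document; each statement's English description precedes it below -/
import Mathlib

section
/- Let σ and ρ be fixed-point-free involutions of {1,…,2n}. Then ρ covers σ in the Bruhat order restricted to fixed-point-free involutions if and only if there exists a transposition t with ρ = t∘σ∘t and l(ρ) = l(σ) + 2. -/
/-- A fixed-point-free involution. -/
def isFPF {m : ℕ} (ι : Equiv.Perm (Fin m)) : Prop :=
  ι * ι = 1 ∧ ∀ i, ι i ≠ i

/-- The length (number of inversions) of a permutation of `Fin m`. -/
def invLength {m : ℕ} (π : Equiv.Perm (Fin m)) : ℕ :=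
  Finset.card (Finset.univ.filter fun p : Fin m × Fin m => p.1 < p.2 ∧ π p.2 < π p.1)

/-- The rank matrix entry `r_{ij}(π) = #{k ≤ i : π(k) ≤ j}` (0-based indices:
`rkm π i j` is the 1-based entry `r_{i+1, j+1}`). -/
def rkm {m : ℕ} (π : Equiv.Perm (Fin m)) (i j : Fin m) : ℕ :=
  Finset.card (Finset.univ.filter fun k : Fin m => k ≤ i ∧ π k ≤ j)

/-- Bruhat order: `σ ≤ ρ` iff every rank matrix entry of `σ` is at least that of `ρ`. -/
def bruhatLE {m : ℕ} (σ ρ : Equiv.Perm (Fin m)) : Prop :=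
  ∀ i j, rkm ρ i j ≤ rkm σ i j

/-- Strict Bruhat order. -/
def bruhatLT {m : ℕ} (σ ρ : Equiv.Perm (Fin m)) : Prop :=
  bruhatLE σ ρ ∧ σ ≠ ρ

/-- `ρ` covers `σ` in the Bruhat order restricted to fixed-point-free involutions. -/
def fpfCovers {m : ℕ} (σ ρ : Equiv.Perm (Fin m)) : Prop :=
  bruhatLT σ ρ ∧ ¬ ∃ τ, isFPF τ ∧ bruhatLT σ τ ∧ bruhatLT τ ρ

/-!
For `a < b` with `ρ b < ρ a` and `ρ b ≠ a`, the conjugate `(a b) ρ (a b) = ρ (ρ b  ρ a) (a b)`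
arises from `ρ` by undoing two descents. Its rank matrix exceeds that of `ρ` by one exactly on
the rectangle `[a, b) × [ρ b, ρ a)` and on its transpose, and its length is smaller by `2` plus
twice the number of points of the graph of `ρ` strictly inside these rectangles.

Conversely, if `σ < ρ`, let `p` be the first position where they differ and `b` the first
position after `p` with `σ p ≤ ρ b < ρ p`. Then `τ = (p b) ρ (p b)` satisfies `σ ≤ τ < ρ`: on the
rectangle, `σ` has the point `(p, σ p)` that `ρ` lacks, and on its overlap with the transpose the
symmetry of involutions gives a second one. The minimality of `b` empties both middle counts, so
`l(ρ) = l(τ) + 2`. By induction on length, `σ < ρ` forces `l(σ) + 2 ≤ l(ρ)`. Hence a cover must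
be `σ = τ`, and a conjugate of length `l(σ) + 2` leaves no room for an intermediate involution.
-/

open Finset Equiv

theorem sum_add_eq_sum_add_of_eq_off_pair {α M : Type*} [Fintype α] [DecidableEq α]
    [AddCommMonoid M] {f g : α → M} {a b : α} (hab : a ≠ b)
    (h : ∀ k, k ≠ a → k ≠ b → f k = g k) :
    ∑ k, f k + (g a + g b) = ∑ k, g k + (f a + f b) := by
  rw [← sum_sdiff (subset_univ {a, b}), ← sum_sdiff (s₂ := univ) (subset_univ {a, b}),
    sum_pair hab, sum_pair hab, sum_congr rfl fun k hk => h k (by grind) (by grind)]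
  abel

theorem card_filter_lt_add_card_filter_lt {α β : Type*} [LinearOrder β] (S : Finset α)
    (f : α → β) {x y : β} (hxy : x < y) (hf : ∀ k ∈ S, f k ≠ x ∧ f k ≠ y) :
    #{k ∈ S | x < f k} + #{k ∈ S | f k < y}
      = #{k ∈ S | f k < x} + #{k ∈ S | y < f k} + 2 * #{k ∈ S | x < f k ∧ f k < y} := by
  simp only [card_filter, mul_sum, ← sum_add_distrib]
  refine sum_congr rfl fun k hk => ?_
  obtain ⟨hx, hy⟩ := hf k hk
  rw [ite_and]
  split_ifs <;> first | rfl | (exfalso; order)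

theorem swap_mul_mul_swap_eq_mul_swap_mul_swap {α : Type*} [DecidableEq α] {π : Perm α}
    (hπ : Function.Involutive π) (a b : α) :
    swap a b * π * swap a b = π * swap (π b) (π a) * swap a b := by
  rw [mul_swap_eq_swap_mul π (π b), hπ, hπ, swap_comm]

theorem swap_mul_mul_swap_apply_left {α : Type*} [DecidableEq α] {π : Perm α} {a b : α}
    (ha : π b ≠ a) (hb : π b ≠ b) : (swap a b * π * swap a b) a = π b := by
  simp [swap_apply_of_ne_of_ne ha hb]

variable {m : ℕ}

theorem isFPF.involutive {π : Perm (Fin m)} (h : isFPF π) : Function.Involutive π :=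
  fun x => by simpa using congrArg (· x) h.1

theorem isFPF.conj {π : Perm (Fin m)} (h : isFPF π) (g : Perm (Fin m)) :
    isFPF (g * π * g⁻¹) := by
  refine ⟨by simp [mul_assoc, ← mul_assoc π π, h.1], fun x hx => h.2 (g⁻¹ x) ?_⟩
  exact g.injective (hx.trans (g.apply_symm_apply x).symm)

theorem rkm_comm {π : Perm (Fin m)} (hπ : Function.Involutive π) (i j : Fin m) :
    rkm π i j = rkm π j i :=
  card_equiv π fun k => by simp [hπ k, and_comm]

theorem rkm_eq_rkm_add_card_band (g : Perm (Fin m)) {j' j : Fin m} (h : j' ≤ j) (i : Fin m) :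
    rkm g i j = rkm g i j' + #{k | k ≤ i ∧ j' < g k ∧ g k ≤ j} := by
  simp only [rkm, card_filter, ← sum_add_distrib]
  refine sum_congr rfl fun k _ => ?_
  simp only [ite_and]
  split_ifs <;> first | rfl | (exfalso; order)

theorem rkm_mul_swap_of_gt {π : Perm (Fin m)} {a b : Fin m} (hab : a < b) (hπ : π b < π a)
    (i j : Fin m) :
    rkm (π * swap a b) i j = rkm π i j + if a ≤ i ∧ i < b ∧ π b ≤ j ∧ j < π a then 1 else 0 := by
  have h := sum_add_eq_sum_add_of_eq_off_pair hab.ne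
    (f := fun k => if k ≤ i ∧ (π * swap a b) k ≤ j then 1 else 0)
    (g := fun k => if k ≤ i ∧ π k ≤ j then (1 : ℕ) else 0)
    fun k ha hb => by rw [Perm.mul_apply, swap_apply_of_ne_of_ne ha hb]
  rw [rkm, rkm, card_filter, card_filter]
  simp only [Perm.mul_apply, swap_apply_left, swap_apply_right] at h ⊢
  simp only [Fin.le_def, Fin.lt_def] at h hab hπ ⊢
  split_ifs at h ⊢ <;> omega

def inversions (π : Perm (Fin m)) : Finset (Fin m × Fin m) :=
  {q | q.1 < q.2 ∧ π q.2 < π q.1}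

theorem invLength_mul_add_card (π s : Perm (Fin m)) :
    invLength (π * s) + #{q ∈ inversions s⁻¹ | π q.2 < π q.1}
      = invLength π + #{q ∈ inversions s⁻¹ | π q.1 < π q.2} := by
  -- `Y` is the inversion set of `π * s` relabelled by `s`; it differs from the inversion set
  -- of `π` only on pairs that `s⁻¹` inverts.
  set Y : Finset (Fin m × Fin m) := {q | s⁻¹ q.1 < s⁻¹ q.2 ∧ π q.2 < π q.1}
  have hY : invLength (π * s) = #Y :=
    card_equiv (s.prodCongr s) fun q => by rw [Finset.mem_filter]; simp [Y]
  have hXY : inversions π \ Y = {q ∈ inversions s⁻¹ | π q.2 < π q.1} := by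
    ext ⟨x, y⟩
    simp only [inversions, Y, mem_sdiff, mem_filter, mem_univ, true_and, not_and, not_lt]
    constructor
    · rintro ⟨⟨hxy, hπ⟩, h⟩
      refine ⟨⟨hxy, (not_lt.1 fun h' => (h h').not_gt hπ).lt_of_ne ?_⟩, hπ⟩
      simpa using hxy.ne'
    · rintro ⟨⟨hxy, hs⟩, hπ⟩
      exact ⟨⟨hxy, hπ⟩, fun h => absurd h hs.not_gt⟩
  have hYX : #(Y \ inversions π) = #{q ∈ inversions s⁻¹ | π q.1 < π q.2} := by
    refine card_equiv (Equiv.prodComm _ _) fun ⟨x, y⟩ => ?_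
    simp only [inversions, Y, mem_sdiff, mem_filter, mem_univ, true_and, not_and, not_lt,
      Equiv.prodComm_apply, Prod.fst_swap, Prod.snd_swap]
    constructor
    · rintro ⟨⟨hs, hπ⟩, h⟩
      refine ⟨⟨(not_lt.1 fun h' => (h h').not_gt hπ).lt_of_ne ?_, hs⟩, hπ⟩
      rintro rfl
      exact lt_irrefl _ hs
    · rintro ⟨⟨hyx, hs⟩, hπ⟩
      exact ⟨⟨hs, hπ⟩, fun h => absurd h hyx.not_gt⟩
  rw [hY, ← hXY, ← hYX, show invLength π = #(inversions π) from rfl, add_comm, card_sdiff_add_card,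
    add_comm (#(inversions π)), card_sdiff_add_card, union_comm]

theorem inversions_swap {a b : Fin m} (hab : a < b) :
    inversions (swap a b) = insert (a, b)
      ((Ioo a b).map (.sectR a _) ∪ (Ioo a b).map (.sectL _ b)) := by
  ext ⟨x, y⟩
  rw [inversions, mem_filter]
  simp only [swap_apply_def, mem_univ, true_and, mem_insert, mem_union, mem_map, mem_Ioo,
    Function.Embedding.sectR_apply, Function.Embedding.sectL_apply, Prod.mk.injEq]
  split_ifs <;> grind

theorem card_filter_inversions_swap {a b : Fin m} (hab : a < b) (Q : Fin m × Fin m → Prop)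
    [DecidablePred Q] :
    #{q ∈ inversions (swap a b) | Q q}
      = (if Q (a, b) then 1 else 0) + #{k ∈ Ioo a b | Q (a, k)}
        + #{k ∈ Ioo a b | Q (k, b)} := by
  rw [card_filter, inversions_swap hab, sum_insert (by simp), sum_union, sum_map, sum_map,
    card_filter, card_filter, add_assoc]
  · rfl
  · simp only [disjoint_left, mem_map, mem_Ioo]
    rintro _ ⟨k, hk, rfl⟩ ⟨l, hl, hlk⟩
    exact hl.1.ne (congrArg Prod.fst hlk).symm

theorem invLength_mul_swap_of_gt {π : Perm (Fin m)} {a b : Fin m} (hab : a < b)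
    (hπ : π b < π a) :
    invLength π
      = invLength (π * swap a b) + 1 + 2 * #{k ∈ Ioo a b | π b < π k ∧ π k < π a} := by
  have h := invLength_mul_add_card π (swap a b)
  rw [swap_inv, card_filter_inversions_swap hab, card_filter_inversions_swap hab,
    if_pos hπ, if_neg hπ.not_gt] at h
  have := card_filter_lt_add_card_filter_lt (Ioo a b) π hπ fun k hk =>
    ⟨π.injective.ne (mem_Ioo.1 hk).2.ne, π.injective.ne (mem_Ioo.1 hk).1.ne'⟩
  dsimp only at h
  omega

section SwapConjugate

variable {ρ : Perm (Fin m)} {a b : Fin m}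

theorem isFPF.mul_swap_apply (hρ : isFPF ρ) (hba : ρ b ≠ a) :
    (ρ * swap (ρ b) (ρ a)) a = ρ a ∧ (ρ * swap (ρ b) (ρ a)) b = ρ b := by
  have hab : ρ a ≠ b := fun h => hba (by rw [← h, hρ.involutive])
  exact ⟨by rw [Perm.mul_apply, swap_apply_of_ne_of_ne (Ne.symm hba) (hρ.2 a).symm],
    by rw [Perm.mul_apply, swap_apply_of_ne_of_ne (hρ.2 b).symm (Ne.symm hab)]⟩

theorem rkm_swap_mul_mul_swap_of_gt (hρ : isFPF ρ) (hab : a < b) (hρab : ρ b < ρ a)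
    (hba : ρ b ≠ a) (i j : Fin m) :
    rkm (swap a b * ρ * swap a b) i j = rkm ρ i j
      + (if ρ b ≤ i ∧ i < ρ a ∧ a ≤ j ∧ j < b then 1 else 0)
      + (if a ≤ i ∧ i < b ∧ ρ b ≤ j ∧ j < ρ a then 1 else 0) := by
  obtain ⟨ha, hb⟩ := hρ.mul_swap_apply hba
  have h₁ := rkm_mul_swap_of_gt hρab (by rwa [hρ.involutive, hρ.involutive]) i j
  have h₂ := rkm_mul_swap_of_gt hab (by rwa [ha, hb]) i j
  rw [hρ.involutive, hρ.involutive] at h₁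
  rw [ha, hb] at h₂
  rw [swap_mul_mul_swap_eq_mul_swap_mul_swap hρ.involutive, h₂, h₁]

theorem invLength_swap_mul_mul_swap_of_gt (hρ : isFPF ρ) (hab : a < b) (hρab : ρ b < ρ a)
    (hba : ρ b ≠ a) :
    invLength ρ = invLength (swap a b * ρ * swap a b) + 2
      + 2 * #{k ∈ Ioo (ρ b) (ρ a) | a < ρ k ∧ ρ k < b}
      + 2 * #{k ∈ Ioo a b |
          ρ b < (swap a b * ρ * swap a b) k ∧ (swap a b * ρ * swap a b) k < ρ a} := by
  obtain ⟨ha, hb⟩ := hρ.mul_swap_apply hba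
  have hτ := swap_mul_mul_swap_eq_mul_swap_mul_swap hρ.involutive a b
  have h₁ := invLength_mul_swap_of_gt hρab (by rwa [hρ.involutive, hρ.involutive])
  have h₂ := invLength_mul_swap_of_gt hab (by rwa [ha, hb])
  rw [hρ.involutive, hρ.involutive] at h₁
  rw [← hτ, ha, hb] at h₂
  have hM : #{k ∈ Ioo a b | ρ b < (ρ * swap (ρ b) (ρ a)) k ∧ (ρ * swap (ρ b) (ρ a)) k < ρ a}
      = #{k ∈ Ioo a b |
          ρ b < (swap a b * ρ * swap a b) k ∧ (swap a b * ρ * swap a b) k < ρ a} := by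
    refine congrArg card (filter_congr fun k hk => ?_)
    rw [mem_Ioo] at hk
    rw [hτ, Perm.mul_apply _ (swap a b), swap_apply_of_ne_of_ne hk.1.ne' hk.2.ne]
  omega

theorem bruhatLT_swap_mul_mul_swap_of_gt (hρ : isFPF ρ) (hab : a < b) (hρab : ρ b < ρ a)
    (hba : ρ b ≠ a) : bruhatLT (swap a b * ρ * swap a b) ρ := by
  refine ⟨fun i j => ?_, fun h => hρab.ne ?_⟩
  · have := rkm_swap_mul_mul_swap_of_gt hρ hab hρab hba i j
    omega
  · rw [← swap_mul_mul_swap_apply_left hba (hρ.2 b), h]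

end SwapConjugate

structure IsLiftPair (σ ρ : Perm (Fin m)) (p b : Fin m) : Prop where
  le : bruhatLE σ ρ
  eq_of_lt : ∀ k < p, σ k = ρ k
  lt_apply : p < σ p
  lt : p < b
  apply_le : σ p ≤ ρ b
  apply_lt : ρ b < ρ p
  gap : ∀ k, p < k → k < b → σ p ≤ ρ k → ρ p ≤ ρ k

namespace IsLiftPair

variable {σ ρ : Perm (Fin m)} {p b : Fin m}

theorem apply_ne (h : IsLiftPair σ ρ p b) : ρ b ≠ p :=
  (h.lt_apply.trans_le h.apply_le).ne'

theorem card_band_lt (h : IsLiftPair σ ρ p b) {i j j' : Fin m} (hj' : j' ⋖ σ p)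
    (hpi : p ≤ i) (hib : i < b) (hj : σ p ≤ j) (hjρ : j < ρ p) :
    #{k | k ≤ i ∧ j' < ρ k ∧ ρ k ≤ j} < #{k | k ≤ i ∧ j' < σ k ∧ σ k ≤ j} := by
  have hp : p ∈ ({k | k ≤ i ∧ j' < σ k ∧ σ k ≤ j} : Finset _) := by
    simp [hpi, hj'.lt, hj]
  refine (card_le_card fun k hk => ?_).trans_lt (card_erase_lt_of_mem hp)
  simp only [mem_filter, mem_univ, true_and, mem_erase] at hk ⊢
  obtain ⟨hki, hjk, hkj⟩ := hk
  have hkp : k < p := by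
    by_contra! hpk
    rcases hpk.eq_or_lt with rfl | hpk
    · exact hkj.not_gt hjρ
    · exact (h.gap k hpk (hki.trans_lt hib) (hj'.ge_of_gt hjk)).not_gt (hkj.trans_lt hjρ)
  rw [h.eq_of_lt k hkp]
  exact ⟨hkp.ne, hki, hjk, hkj⟩

theorem rkm_lt (h : IsLiftPair σ ρ p b) {i j : Fin m} (hpi : p ≤ i) (hib : i < b)
    (hj : σ p ≤ j) (hjρ : j < ρ p) : rkm ρ i j < rkm σ i j := by
  obtain ⟨j', -, hj'⟩ := exists_le_covBy_of_lt h.lt_apply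
  rw [rkm_eq_rkm_add_card_band ρ (hj'.le.trans hj),
    rkm_eq_rkm_add_card_band σ (hj'.le.trans hj)]
  have := h.card_band_lt hj' hpi hib hj hjρ
  have := h.le i j'
  omega

theorem rkm_add_two_le (h : IsLiftPair σ ρ p b) (hσ : Function.Involutive σ)
    (hρ : Function.Involutive ρ) {i j : Fin m} (hi : σ p ≤ i) (hib : i < b) (hiρ : i < ρ p)
    (hj : σ p ≤ j) (hjρ : j < ρ p) : rkm ρ i j + 2 ≤ rkm σ i j := by
  obtain ⟨j', hpj', hj'⟩ := exists_le_covBy_of_lt h.lt_apply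
  rw [rkm_eq_rkm_add_card_band ρ (hj'.le.trans hj),
    rkm_eq_rkm_add_card_band σ (hj'.le.trans hj)]
  have h₁ := h.card_band_lt hj' (h.lt_apply.le.trans hi) hib hj hjρ
  have h₂ : rkm ρ i j' < rkm σ i j' := by
    rw [rkm_comm hρ, rkm_comm hσ]
    exact h.rkm_lt hpj' (hj'.lt.trans_le hi |>.trans hib) hi hiρ
  omega

theorem bruhatLE_swap_mul_mul_swap (h : IsLiftPair σ ρ p b) (hσ : isFPF σ) (hρ : isFPF ρ) :
    bruhatLE σ (swap p b * ρ * swap p b) := by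
  intro i j
  have hτ := rkm_swap_mul_mul_swap_of_gt hρ h.lt h.apply_lt h.apply_ne i j
  have hle := h.le i j
  have hD := h.apply_le
  split_ifs at hτ with h₁ h₂ h₂
  · have := h.rkm_add_two_le hσ.involutive hρ.involutive (hD.trans h₁.1) h₂.2.1 h₁.2.1
      (hD.trans h₂.2.2.1) h₂.2.2.2
    omega
  · have := h.rkm_lt h₁.2.2.1 h₁.2.2.2 (hD.trans h₁.1) h₁.2.1
    rw [rkm_comm hρ.involutive, rkm_comm hσ.involutive] at this
    omega
  · have := h.rkm_lt h₂.1 h₂.2.1 (hD.trans h₂.2.2.1) h₂.2.2.2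
    omega
  · omega

theorem invLength_eq (h : IsLiftPair σ ρ p b) (hρ : isFPF ρ) :
    invLength ρ = invLength (swap p b * ρ * swap p b) + 2 := by
  have hM₁ : #{k ∈ Ioo (ρ b) (ρ p) | p < ρ k ∧ ρ k < b} = 0 := by
    refine card_eq_zero.2 (filter_eq_empty_iff.2 fun k hk ⟨hpk, hkb⟩ => ?_)
    rw [mem_Ioo] at hk
    have := h.gap (ρ k) hpk hkb (by rw [hρ.involutive]; exact h.apply_le.trans hk.1.le)
    rw [hρ.involutive] at this
    exact this.not_gt hk.2
  have hM₂ : #{k ∈ Ioo p b |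
      ρ b < (swap p b * ρ * swap p b) k ∧ (swap p b * ρ * swap p b) k < ρ p} = 0 := by
    refine card_eq_zero.2 (filter_eq_empty_iff.2 fun k hk ⟨h₁, h₂⟩ => ?_)
    rw [mem_Ioo] at hk
    rw [Perm.mul_apply, Perm.mul_apply, swap_apply_of_ne_of_ne hk.1.ne' hk.2.ne] at h₁ h₂
    by_cases hkp : ρ k = p
    · rw [hkp, swap_apply_left] at h₂
      have : k = ρ p := by rw [← hkp, hρ.involutive]
      exact (hk.2.trans h₂).ne this
    by_cases hkb : ρ k = b
    · rw [hkb, swap_apply_right] at h₁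
      exact h₁.not_gt (h.lt_apply.trans_le h.apply_le)
    rw [swap_apply_of_ne_of_ne hkp hkb] at h₁ h₂
    exact (h.gap k hk.1 hk.2 (h.apply_le.trans h₁.le)).not_gt h₂
  have := invLength_swap_mul_mul_swap_of_gt hρ h.lt h.apply_lt h.apply_ne
  omega

end IsLiftPair

theorem apply_lt_apply_of_bruhatLE {σ ρ : Perm (Fin m)} {p : Fin m} (hle : bruhatLE σ ρ)
    (hagree : ∀ k < p, σ k = ρ k) (hp : σ p ≠ ρ p) : σ p < ρ p := by
  refine hp.lt_of_le (not_lt.1 fun hlt => (hle p (ρ p)).not_gt (card_lt_card ?_))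
  refine (ssubset_iff_of_subset fun k hk => ?_).2 ⟨p, by simp, by simp [hlt]⟩
  simp only [mem_filter, mem_univ, true_and] at hk ⊢
  rcases hk.1.lt_or_eq with hkp | rfl
  · exact ⟨hk.1, hagree k hkp ▸ hk.2⟩
  · exact absurd hk.2 hlt.not_ge

theorem lt_apply_of_first_diff {σ ρ : Perm (Fin m)} (hσ : isFPF σ) (hρ : Function.Involutive ρ)
    {p : Fin m} (hagree : ∀ k < p, σ k = ρ k) (hp : σ p ≠ ρ p) : p < σ p := by
  refine (hσ.2 p).symm.lt_of_le (not_lt.1 fun hlt => hp ?_)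
  rw [← hρ (σ p), ← hagree _ hlt, hσ.involutive]

theorem exists_isLiftPair {σ ρ : Perm (Fin m)} (hσ : isFPF σ) (hρ : isFPF ρ)
    (h : bruhatLT σ ρ) : ∃ p b, IsLiftPair σ ρ p b := by
  obtain ⟨p, hp, hpmin⟩ := wellFounded_lt.has_min {k | σ k ≠ ρ k} (DFunLike.ne_iff.1 h.2)
  have hagree : ∀ k < p, σ k = ρ k := fun k hk => not_not.1 fun hk' => hpmin k hk' hk
  have hσρ := apply_lt_apply_of_bruhatLE h.1 hagree hp
  have hpσ := lt_apply_of_first_diff hσ hρ.involutive hagree hp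
  have hwit : p < ρ (σ p) := by
    refine lt_of_not_ge fun hle => ?_
    rcases hle.lt_or_eq with hlt | heq
    · have := hagree _ hlt
      rw [hρ.involutive] at this
      exact hlt.ne (σ.injective this)
    · exact hp (by rw [← heq, hρ.involutive, heq])
  obtain ⟨b, ⟨hpb, hb, hbρ⟩, hbmin⟩ := wellFounded_lt.has_min
    {k | p < k ∧ σ p ≤ ρ k ∧ ρ k < ρ p}
    ⟨ρ (σ p), hwit, by rw [hρ.involutive]; exact ⟨le_rfl, hσρ⟩⟩
  exact ⟨p, b, h.1, hagree, hpσ, hpb, hb, hbρ,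
    fun k hpk hkb hk => not_lt.1 fun hk' => hbmin k ⟨hpk, hk, hk'⟩ hkb⟩

theorem exists_swap_conj_below_of_bruhatLT {σ ρ : Perm (Fin m)} (hσ : isFPF σ) (hρ : isFPF ρ)
    (h : bruhatLT σ ρ) :
    ∃ τ, isFPF τ ∧ bruhatLE σ τ ∧ bruhatLT τ ρ ∧
      ∃ a b : Fin m, a ≠ b ∧ ρ = swap a b * τ * swap a b ∧ invLength ρ = invLength τ + 2 := by
  obtain ⟨p, b, hpb⟩ := exists_isLiftPair hσ hρ h
  refine ⟨swap p b * ρ * swap p b, by simpa using hρ.conj (swap p b),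
    hpb.bruhatLE_swap_mul_mul_swap hσ hρ,
    bruhatLT_swap_mul_mul_swap_of_gt hρ hpb.lt hpb.apply_lt hpb.apply_ne,
    p, b, hpb.lt.ne, by simp [mul_assoc], hpb.invLength_eq hρ⟩

theorem invLength_add_two_le_of_bruhatLT {σ ρ : Perm (Fin m)} (hσ : isFPF σ) (hρ : isFPF ρ)
    (h : bruhatLT σ ρ) : invLength σ + 2 ≤ invLength ρ := by
  induction hl : invLength ρ using Nat.strong_induction_on generalizing ρ with
  | _ n ih =>
  obtain ⟨τ, hτ, hστ, -, -, -, -, -, hlen⟩ := exists_swap_conj_below_of_bruhatLT hσ hρ h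
  rcases eq_or_ne σ τ with rfl | hne
  · omega
  · have := ih (invLength τ) (by omega) hτ ⟨hστ, hne⟩ rfl
    omega

theorem fpfCovers_of_swap_mul_mul_swap {σ ρ : Perm (Fin m)} (hσ : isFPF σ) (hρ : isFPF ρ)
    {a b : Fin m} (hne : a ≠ b) (hconj : ρ = swap a b * σ * swap a b)
    (hlen : invLength ρ = invLength σ + 2) : fpfCovers σ ρ := by
  wlog hab : a < b generalizing a b
  · exact this hne.symm (swap_comm a b ▸ hconj) (hne.lt_or_gt.resolve_left hab)
  have hba : σ b ≠ a := by
    intro hσb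
    have hσa : σ a = b := by rw [← hσb, hσ.involutive]
    rw [mul_assoc, mul_swap_eq_swap_mul σ, hσa, hσb, swap_comm, swap_mul_self_mul] at hconj
    subst hconj
    omega
  rcases lt_or_gt_of_ne (σ.injective.ne hab.ne) with hσab | hσab
  · have hρa : ρ a = σ b := hconj ▸ swap_mul_mul_swap_apply_left hba (hσ.2 b)
    have hρb : ρ b = σ a := by
      rw [hconj, swap_comm a b]
      exact swap_mul_mul_swap_apply_left (fun h => hba (by rw [← h, hσ.involutive]))
        (hσ.2 a)
    have hσρ : σ = swap a b * ρ * swap a b := by simp [hconj, mul_assoc]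
    have hlt : bruhatLT σ ρ := by
      rw [hσρ]
      exact bruhatLT_swap_mul_mul_swap_of_gt hρ hab (by rwa [hρa, hρb]) (hρb ▸ hσ.2 a)
    refine ⟨hlt, fun ⟨τ, hτ, hστ, hτρ⟩ => ?_⟩
    have := invLength_add_two_le_of_bruhatLT hσ hτ hστ
    have := invLength_add_two_le_of_bruhatLT hτ hρ hτρ
    omega
  · have := invLength_add_two_le_of_bruhatLT hρ hσ
      (hconj ▸ bruhatLT_swap_mul_mul_swap_of_gt hσ hab hσab hba)
    omega

/-- `ρ` covers `σ` in the Bruhat order restricted to fixed-point-free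
involutions iff `ρ` is a conjugate of `σ` by a transposition with `l(ρ) = l(σ) + 2`. -/
theorem fpf_cover_iff {n : ℕ} (σ ρ : Equiv.Perm (Fin (2*n)))
    (hσ : isFPF σ) (hρ : isFPF ρ) :
    fpfCovers σ ρ ↔
      ∃ a b : Fin (2*n), a ≠ b ∧ ρ = Equiv.swap a b * σ * Equiv.swap a b ∧
        invLength ρ = invLength σ + 2 := by
  refine ⟨fun ⟨hlt, hmin⟩ => ?_,
    fun ⟨a, b, hab, hconj, hlen⟩ => fpfCovers_of_swap_mul_mul_swap hσ hρ hab hconj hlen⟩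
  obtain ⟨τ, hτ, hστ, hτρ, hstep⟩ := exists_swap_conj_below_of_bruhatLT hσ hρ hlt
  obtain rfl : σ = τ := by_contra fun hne => hmin ⟨τ, hτ, ⟨hστ, hne⟩, hτρ⟩
  exact hstep
end

section
/- Let ι be a fixed-point-free involution of {1,…,2n} and let w ∈ S_{2n} be of minimal length among permutations satisfying w⁻¹ ∘ J̄_n ∘ w = ι. Let M be a 2n×2n complex matrix that is lower triangular (M_{ij} = 0 whenever i < j) and satisfies MJ + JMᵀ = 0 (i.e., M lies in the symplectic Lie algebra 𝔰𝔭_n). Then M_{ij} = 0 whenever w⁻¹(i) < w⁻¹(j); equivalently, 𝔟₋ ∩ 𝔰𝔭_n ⊆ w 𝔟₋ w⁻¹, where 𝔟₋ is the set of lower triangular matrices. -/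
open Matrix

/-- The fixed-point-free involution `J̄ₙ = 2143⋯(2n)(2n−1)`, in 0-based indexing:
it swaps `2k ↔ 2k+1`. -/
def Jbar (n : ℕ) : Equiv.Perm (Fin (2*n)) where
  toFun i := ⟨2*(i.val/2) + (1 - i.val % 2), by have := i.isLt; omega⟩
  invFun i := ⟨2*(i.val/2) + (1 - i.val % 2), by have := i.isLt; omega⟩
  left_inv i := by apply Fin.ext; simp only; omega
  right_inv i := by apply Fin.ext; simp only; omega

/-- The `2n × 2n` block-diagonal symplectic form with `2 × 2` diagonal blocks
`[[0,1],[-1,0]]`. -/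
def Jmat (n : ℕ) : Matrix (Fin (2*n)) (Fin (2*n)) ℂ :=
  Matrix.of fun i j =>
    if i.val % 2 = 0 ∧ j.val = i.val + 1 then 1
    else if i.val % 2 = 1 ∧ i.val = j.val + 1 then -1
    else 0

/-!
Let `j < i`. If `{j, i}` is not a block `{2k, 2k+1}` of `J̄ₙ`, then also `J̄ₙ j < J̄ₙ i`, and the
`(i, j)` entry of `MJ + JMᵀ = 0` reads `± M_{ij} ± M_{J̄ₙ j, J̄ₙ i} = 0`, where the second entry lies
above the diagonal. If `{j, i}` is a block, the transposition `(j i)` commutes with `J̄ₙ`, so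
`(j i) w` is another solution of `v⁻¹ J̄ₙ v = ι`; when `w⁻¹ i < w⁻¹ j` it is shorter than `w`
because `j` and `i` are adjacent values, contradicting minimality.
-/

lemma conj_swap_mul_of_involutive {α : Type*} [DecidableEq α] {τ : Equiv.Perm α}
    (hτ : Function.Involutive τ) (x : α) (w : Equiv.Perm α) :
    (Equiv.swap x (τ x) * w)⁻¹ * τ * (Equiv.swap x (τ x) * w) = w⁻¹ * τ * w := by
  set s := Equiv.swap x (τ x)
  have hcomm : τ * s = s * τ := by
    rw [← mul_inv_eq_iff_eq_mul, ← Equiv.swap_apply_apply, hτ x, Equiv.swap_comm]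
  have hfix : s⁻¹ * τ * s = τ := by
    rw [mul_assoc, hcomm, ← mul_assoc, inv_mul_cancel, one_mul]
  calc (s * w)⁻¹ * τ * (s * w) = w⁻¹ * (s⁻¹ * τ * s) * w := by group
    _ = w⁻¹ * τ * w := by rw [hfix]

section Jbar

variable {n : ℕ}

lemma Jbar_val (i : Fin (2*n)) : (Jbar n i).val = 2*(i.val/2) + (1 - i.val % 2) := rfl

@[simp]
lemma Jbar_Jbar (i : Fin (2*n)) : Jbar n (Jbar n i) = i := by
  ext; rw [Jbar_val, Jbar_val]; omega

lemma Jbar_val_of_lt {j : Fin (2*n)} (h : j < Jbar n j) : (Jbar n j).val = j.val + 1 := by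
  rw [Fin.lt_def, Jbar_val] at h; rw [Jbar_val]; omega

lemma Jbar_lt_Jbar {i j : Fin (2*n)} (h : j < i) (hne : Jbar n j ≠ i) :
    Jbar n j < Jbar n i := by
  rw [Fin.lt_def] at h
  rw [Ne, Fin.ext_iff, Jbar_val] at hne
  rw [Fin.lt_def, Jbar_val, Jbar_val]
  omega

end Jbar

section Jmat

variable {n : ℕ}

lemma Jmat_eq_zero_of_ne {a k : Fin (2*n)} (h : k ≠ Jbar n a) : Jmat n a k = 0 := by
  rw [Ne, Fin.ext_iff, Jbar_val] at h
  simp only [Jmat, of_apply]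
  split_ifs <;> first | rfl | omega

lemma Jmat_apply_Jbar_ne_zero (a : Fin (2*n)) : Jmat n a (Jbar n a) ≠ 0 := by
  have := Jbar_val a
  simp only [Jmat, of_apply]
  split_ifs
  · norm_num
  · norm_num
  · omega

lemma mul_Jmat_apply (M : Matrix (Fin (2*n)) (Fin (2*n)) ℂ) (a b : Fin (2*n)) :
    (M * Jmat n) a b = M a (Jbar n b) * Jmat n (Jbar n b) b := by
  rw [mul_apply, Finset.sum_eq_single (Jbar n b)]
  · intro k _ hk
    rw [Jmat_eq_zero_of_ne (fun h => hk (by rw [h, Jbar_Jbar])), mul_zero]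
  · simp

lemma Jmat_mul_apply (M : Matrix (Fin (2*n)) (Fin (2*n)) ℂ) (a b : Fin (2*n)) :
    (Jmat n * M) a b = Jmat n a (Jbar n a) * M (Jbar n a) b := by
  rw [mul_apply, Finset.sum_eq_single (Jbar n a)]
  · intro k _ hk
    rw [Jmat_eq_zero_of_ne hk, zero_mul]
  · simp

lemma apply_eq_zero_of_apply_Jbar_eq_zero {M : Matrix (Fin (2*n)) (Fin (2*n)) ℂ}
    (hsp : M * Jmat n + Jmat n * Mᵀ = 0) {i j : Fin (2*n)}
    (h : M (Jbar n j) (Jbar n i) = 0) : M i j = 0 := by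
  have hij := congrFun (congrFun hsp (Jbar n j)) i
  rw [Matrix.add_apply, mul_Jmat_apply, Jmat_mul_apply, h, zero_mul, zero_add, Jbar_Jbar,
    transpose_apply, Matrix.zero_apply] at hij
  exact (mul_eq_zero.mp hij).resolve_left (by simpa using Jmat_apply_Jbar_ne_zero (Jbar n j))

end Jmat

section invLength

variable {m : ℕ}

lemma lt_or_eq_of_swap_lt_swap {u v x y : Fin m} (hv : v.val = u.val + 1)
    (h : Equiv.swap u v x < Equiv.swap u v y) : x < y ∨ (x = v ∧ y = u) := by
  simp only [Fin.lt_def, Equiv.swap_apply_def] at h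
  simp only [Fin.lt_def, Fin.ext_iff]
  split_ifs at h <;> simp only [Fin.ext_iff] at * <;> omega

lemma invLength_swap_mul_lt {w : Equiv.Perm (Fin m)} {j i : Fin m}
    (hi : i.val = j.val + 1) (hpos : w⁻¹ i < w⁻¹ j) :
    invLength (Equiv.swap j i * w) < invLength w := by
  have hji : j < i := Fin.lt_def.mpr (by omega)
  unfold invLength
  apply Finset.card_lt_card
  rw [Finset.ssubset_iff_of_subset]
  · refine ⟨(w⁻¹ i, w⁻¹ j), ?_, ?_⟩
    · simpa using ⟨hpos, hji⟩
    · rw [Finset.mem_filter]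
      simp only [Equiv.Perm.coe_mul, Function.comp_apply, Equiv.Perm.coe_inv,
        Equiv.apply_symm_apply, Equiv.swap_apply_left, Equiv.swap_apply_right]
      exact fun h => hji.not_gt h.2.2
  · refine Finset.monotone_filter_right _ fun p _ hp => ⟨hp.1, ?_⟩
    simp only [Equiv.Perm.coe_mul, Function.comp_apply] at hp
    refine (lt_or_eq_of_swap_lt_swap hi hp.2).resolve_right ?_
    rintro ⟨h2, h1⟩
    rw [← Equiv.Perm.eq_inv_iff_eq] at h1 h2
    exact hpos.not_gt (h1 ▸ h2 ▸ hp.1)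

end invLength

theorem lower_triangular_sp_subset_general {n : ℕ} (ι w : Equiv.Perm (Fin (2*n)))
    (hw : w⁻¹ * Jbar n * w = ι)
    (hmin : ∀ v : Equiv.Perm (Fin (2*n)), v⁻¹ * Jbar n * v = ι →
      invLength w ≤ invLength v)
    (M : Matrix (Fin (2*n)) (Fin (2*n)) ℂ)
    (hlow : ∀ i j : Fin (2*n), i < j → M i j = 0)
    (hsp : M * Jmat n + Jmat n * Mᵀ = 0) :
    ∀ i j : Fin (2*n), w⁻¹ i < w⁻¹ j → M i j = 0 := by
  intro i j hij
  rcases lt_trichotomy i j with h | rfl | h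
  · exact hlow i j h
  · exact absurd hij (lt_irrefl _)
  by_cases hblock : Jbar n j = i
  · subst hblock
    have hshorter := invLength_swap_mul_lt (Jbar_val_of_lt h) hij
    have hsol := (conj_swap_mul_of_involutive Jbar_Jbar j w).trans hw
    exact absurd (hmin _ hsol) (not_le.mpr hshorter)
  · exact apply_eq_zero_of_apply_Jbar_eq_zero hsp (hlow _ _ (Jbar_lt_Jbar h hblock))

/-- if `w` is of minimal length with `w⁻¹ ∘ J̄ₙ ∘ w = ι` and `M` is a
lower triangular matrix in `𝔰𝔭ₙ`, then `M_{ij} = 0` whenever `w⁻¹(i) < w⁻¹(j)`;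
i.e. `𝔟₋ ∩ 𝔰𝔭ₙ ⊆ w 𝔟₋ w⁻¹`. -/
theorem lower_triangular_sp_subset {n : ℕ} (ι w : Equiv.Perm (Fin (2*n)))
    (hι : isFPF ι) (hw : w⁻¹ * Jbar n * w = ι)
    (hmin : ∀ v : Equiv.Perm (Fin (2*n)), v⁻¹ * Jbar n * v = ι →
      invLength w ≤ invLength v)
    (M : Matrix (Fin (2*n)) (Fin (2*n)) ℂ)
    (hlow : ∀ i j : Fin (2*n), i < j → M i j = 0)
    (hsp : M * Jmat n + Jmat n * Mᵀ = 0) :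
    ∀ i j : Fin (2*n), w⁻¹ i < w⁻¹ j → M i j = 0 :=
  lower_triangular_sp_subset_general ι w hw hmin M hlow hsp
end
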